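/- arXiv:1302.5366 — 6 statements merged into one kernel-verified Lean document; each statement's English description precedes it below -/
import Mathlib

section
/- Let G be a finite directed graph such that d⁻(v) + d⁺(v) = Δ for every vertex v (a degree-Δ oriented graph). If the uniform distribution on the vertices is a stationary distribution of the random walk on G, then every vertex has nonzero in-degree and nonzero out-degree, and for every edge (u,v), d⁺(u) = d⁻(v). -/
/-!
Summing the stationarity equations over all vertices and swapping the order of summation gives
`∑ᵤ [d⁺(u) ≠ 0] = n`, so no vertex is a sink; a source would receive mass `0 ≠ 1`. Expanding
`∑_{(u,v) ∈ E} (d⁺(u) - d⁻(v))² / d⁺(u)` and using stationarity at each head `v` yields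
`∑ᵤ d⁺(u)² - ∑ᵥ d⁻(v)²`. Since `d⁻ + d⁺ = Δ`, we have `d⁻² - d⁺² = Δ (d⁻ - d⁺)`, whose sum
vanishes by the handshake lemma; hence the sum of nonnegative terms is zero and every edge has
`d⁺(u) = d⁻(v)`.
-/

open Finset

/-- Out-degree of a vertex in a finite directed graph. -/
def outdeg {V : Type*} [Fintype V] (A : V → V → Prop) [DecidableRel A] (u : V) : ℕ :=
  (univ.filter (fun v => A u v)).card

/-- In-degree of a vertex in a finite directed graph. -/
def indeg {V : Type*} [Fintype V] (A : V → V → Prop) [DecidableRel A] (v : V) : ℕ :=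
  (univ.filter (fun u => A u v)).card

theorem Finset.sum_sq_eq_sum_sq_of_add_eq_const {ι R : Type*} [CommRing R] (s : Finset ι)
    {f g : ι → R} {c : R} (hfg : ∀ i ∈ s, f i + g i = c)
    (hsum : ∑ i ∈ s, f i = ∑ i ∈ s, g i) :
    ∑ i ∈ s, f i ^ 2 = ∑ i ∈ s, g i ^ 2 := by
  rw [← sub_eq_zero, ← sum_sub_distrib]
  calc ∑ i ∈ s, (f i ^ 2 - g i ^ 2) = ∑ i ∈ s, c * (f i - g i) :=
        sum_congr rfl fun i hi => by rw [← hfg i hi]; ring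
    _ = 0 := by rw [← mul_sum, sum_sub_distrib, hsum, sub_self, mul_zero]

section Digraph

variable {V : Type*} [Fintype V] (A : V → V → Prop) [DecidableRel A]

/-- Stationarity of the uniform distribution for the random walk, with the common factor `1/n`
cancelled. -/
def IsUniformStationary : Prop :=
  ∀ v : V, ∑ u ∈ univ.filter (A · v), (1 : ℝ) / outdeg A u = 1

theorem sum_in_nbrs_comm {M : Type*} [AddCommMonoid M] (f : V → V → M) :
    ∑ v, ∑ u ∈ univ.filter (A · v), f u v = ∑ u, ∑ v ∈ univ.filter (A u ·), f u v := by
  simp only [sum_filter]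
  exact sum_comm

theorem sum_indeg_eq_sum_outdeg : ∑ v, indeg A v = ∑ u, outdeg A u := by
  simp only [indeg, outdeg, card_eq_sum_ones]
  exact sum_in_nbrs_comm A fun _ _ => 1

theorem sum_in_nbrs_const {R : Type*} [NonAssocSemiring R] (v : V) (c : R) :
    ∑ _u ∈ univ.filter (A · v), c = indeg A v * c := by
  rw [sum_const, nsmul_eq_mul]
  rfl

theorem sum_out_nbrs_const {R : Type*} [NonAssocSemiring R] (u : V) (c : R) :
    ∑ _v ∈ univ.filter (A u ·), c = outdeg A u * c := by
  rw [sum_const, nsmul_eq_mul]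
  rfl

namespace IsUniformStationary

variable {A}

theorem indeg_ne_zero (h : IsUniformStationary A) (v : V) : indeg A v ≠ 0 := by
  intro hv
  have hmass := h v
  rw [card_eq_zero.mp hv, sum_empty] at hmass
  exact zero_ne_one hmass

theorem outdeg_ne_zero (h : IsUniformStationary A) (u : V) : outdeg A u ≠ 0 := by
  have htotal : ∑ u, (outdeg A u : ℝ) / outdeg A u = ∑ _u : V, (1 : ℝ) :=
    calc ∑ u, (outdeg A u : ℝ) / outdeg A u
        = ∑ u, ∑ v ∈ univ.filter (A u ·), (1 : ℝ) / outdeg A u := by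
          simp only [sum_out_nbrs_const, mul_one_div]
      _ = ∑ v, ∑ u ∈ univ.filter (A · v), (1 : ℝ) / outdeg A u := (sum_in_nbrs_comm A _).symm
      _ = ∑ _v : V, (1 : ℝ) := sum_congr rfl fun v _ => h v
  have hu := (sum_eq_sum_iff_of_le fun u _ => div_self_le_one _).mp htotal u (mem_univ u)
  intro h0
  simp [h0] at hu

theorem sum_edges_sq_div_outdeg (h : IsUniformStationary A) :
    ∑ v, ∑ u ∈ univ.filter (A · v), ((outdeg A u : ℝ) - indeg A v) ^ 2 / outdeg A u
      = ∑ u, (outdeg A u : ℝ) ^ 2 - ∑ v, (indeg A v : ℝ) ^ 2 := by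
  have hhead : ∀ v, ∑ u ∈ univ.filter (A · v), ((outdeg A u : ℝ) - indeg A v) ^ 2 / outdeg A u
      = ∑ u ∈ univ.filter (A · v), (outdeg A u : ℝ) - (indeg A v : ℝ) ^ 2 := by
    intro v
    have hexpand : ∀ u ∈ univ.filter (A · v),
        ((outdeg A u : ℝ) - indeg A v) ^ 2 / outdeg A u
          = outdeg A u - 2 * indeg A v + (indeg A v : ℝ) ^ 2 * (1 / outdeg A u) := by
      intro u _
      have hu : (outdeg A u : ℝ) ≠ 0 := Nat.cast_ne_zero.mpr (h.outdeg_ne_zero u)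
      field_simp
      ring
    rw [sum_congr rfl hexpand, sum_add_distrib, sum_sub_distrib, sum_in_nbrs_const, ← mul_sum,
      h v]
    ring
  rw [sum_congr rfl fun v _ => hhead v, sum_sub_distrib, sum_in_nbrs_comm A]
  simp only [sum_out_nbrs_const, sq]

theorem outdeg_eq_indeg_of_sum_sq_eq (h : IsUniformStationary A)
    (hsq : ∑ u, (outdeg A u : ℝ) ^ 2 = ∑ v, (indeg A v : ℝ) ^ 2) {u v : V} (huv : A u v) :
    outdeg A u = indeg A v := by
  have hpos : ∀ u, (0 : ℝ) < outdeg A u := fun u => Nat.cast_pos.mpr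
    (Nat.pos_of_ne_zero (h.outdeg_ne_zero u))
  have hnonneg : ∀ v, ∀ u ∈ univ.filter (A · v),
      0 ≤ ((outdeg A u : ℝ) - indeg A v) ^ 2 / outdeg A u :=
    fun v u _ => div_nonneg (sq_nonneg _) (hpos u).le
  have htotal := h.sum_edges_sq_div_outdeg
  rw [hsq, sub_self, sum_eq_zero_iff_of_nonneg fun v _ => sum_nonneg (hnonneg v)] at htotal
  have hterm := (sum_eq_zero_iff_of_nonneg (hnonneg v)).mp (htotal v (mem_univ v)) u
    (mem_filter.mpr ⟨mem_univ u, huv⟩)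
  rw [div_eq_zero_iff, or_iff_left (hpos u).ne', sq_eq_zero_iff, sub_eq_zero] at hterm
  exact_mod_cast hterm

end IsUniformStationary

end Digraph

theorem stmt1_general {V : Type*} [Fintype V] (A : V → V → Prop) [DecidableRel A]
    (Δ : ℕ)
    (hreg : ∀ v : V, indeg A v + outdeg A v = Δ)
    (hstat : ∀ v : V, ∑ u ∈ univ.filter (fun u => A u v), (1 : ℝ) / (outdeg A u) = 1) :
    (∀ v : V, indeg A v ≠ 0 ∧ outdeg A v ≠ 0) ∧
      ∀ u v : V, A u v → outdeg A u = indeg A v := by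
  have hstat : IsUniformStationary A := hstat
  have hsq : ∑ v, (indeg A v : ℝ) ^ 2 = ∑ u, (outdeg A u : ℝ) ^ 2 :=
    sum_sq_eq_sum_sq_of_add_eq_const univ (c := (Δ : ℝ))
      (fun v _ => by exact_mod_cast hreg v) (by exact_mod_cast sum_indeg_eq_sum_outdeg A)
  exact ⟨fun v => ⟨hstat.indeg_ne_zero v, hstat.outdeg_ne_zero v⟩,
    fun u v huv => hstat.outdeg_eq_indeg_of_sum_sq_eq hsq.symm huv⟩

/-- In a degree-Δ oriented graph, if the uniform distribution is stationary for the
random walk, then all in- and out-degrees are nonzero and every edge `(u,v)`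
satisfies `d⁺(u) = d⁻(v)`. -/
theorem stmt1 {V : Type*} [Fintype V] [Nonempty V] (A : V → V → Prop) [DecidableRel A]
    (Δ : ℕ) (hΔ : 0 < Δ)
    (hreg : ∀ v : V, indeg A v + outdeg A v = Δ)
    (hstat : ∀ v : V, ∑ u ∈ univ.filter (fun u => A u v), (1 : ℝ) / (outdeg A u) = 1) :
    (∀ v : V, indeg A v ≠ 0 ∧ outdeg A v ≠ 0) ∧
      ∀ u v : V, A u v → outdeg A u = indeg A v :=
  stmt1_general A Δ hreg hstat
end

section
/- If the uniform distribution is a stationary distribution of the random walk on a finite directed graph G, then every weakly connected component of G is strongly connected. -/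
/-!
Give each edge `u → v` the weight `1 / d⁺(u)`. Every vertex then sends out total weight `1`, and
stationarity of the uniform distribution says that every vertex also receives total weight `1`.
For a set `S` closed under out-edges, the weight leaving `S`-vertices stays in `S` and accounts for
all of `|S|`, which is also the weight entering `S`; so no edge enters `S` from outside. Applied to
the set of vertices reachable from `v`, an edge `u → v` forces `u` to be reachable from `v`: every
edge lies on a directed cycle.
-/

open Finset

section Flow

variable {V R : Type*} [Fintype V] [AddCommGroup R] [PartialOrder R] [IsOrderedAddMonoid R]

theorem flow_in_eq_zero_of_flow_out_eq_zero {F : V → V → R} (hF : ∀ a b, 0 ≤ F a b)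
    (hcons : ∀ v, ∑ u, F u v = ∑ w, F v w) (S : Finset V) (hout : ∀ a ∈ S, ∀ b ∉ S, F a b = 0) :
    ∀ a ∉ S, ∀ b ∈ S, F a b = 0 := by
  classical
  have hrow : ∀ a ∈ S, ∑ b ∈ S, F a b = ∑ b, F a b := fun a ha =>
    sum_subset (subset_univ S) fun b _ hb => hout a ha b hb
  have hsplit : ∑ b ∈ S, ∑ a ∈ S, F a b + ∑ b ∈ S, ∑ a ∈ Sᶜ, F a b = ∑ b ∈ S, ∑ a ∈ S, F a b :=
    calc _ = ∑ b ∈ S, ∑ a, F a b := by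
            rw [← sum_add_distrib]
            exact sum_congr rfl fun b _ => sum_add_sum_compl S (F · b)
      _ = ∑ a ∈ S, ∑ b, F a b := sum_congr rfl fun b _ => hcons b
      _ = ∑ b ∈ S, ∑ a ∈ S, F a b := (sum_congr rfl hrow).symm.trans sum_comm
  have hin : ∑ b ∈ S, ∑ a ∈ Sᶜ, F a b = 0 := add_eq_left.mp hsplit
  intro a ha b hb
  have hb' := (sum_eq_zero_iff_of_nonneg fun b _ => sum_nonneg fun a _ => hF a b).mp hin b hb
  exact (sum_eq_zero_iff_of_nonneg fun a _ => hF a b).mp hb' a (mem_compl.mpr ha)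

end Flow

section RandomWalk

variable {V : Type*} [Fintype V] (A : V → V → Prop) [DecidableRel A]

noncomputable def walkWeight (a b : V) : ℝ :=
  if A a b then 1 / (outdeg A a : ℝ) else 0

theorem walkWeight_nonneg (a b : V) : 0 ≤ walkWeight A a b := by
  unfold walkWeight; split <;> positivity

theorem walkWeight_pos {a b : V} (hpos : 0 < outdeg A a) (hab : A a b) :
    0 < walkWeight A a b := by
  rw [walkWeight, if_pos hab]
  positivity

theorem sum_walkWeight_right {a : V} (hpos : 0 < outdeg A a) : ∑ b, walkWeight A a b = 1 := by
  unfold walkWeight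
  rw [← sum_filter, sum_const, nsmul_eq_mul, ← outdeg]
  field_simp

theorem sum_walkWeight_left_of_stationary
    (hstat : ∀ v : V, ∑ u ∈ univ.filter (fun u => A u v), (1 : ℝ) / (outdeg A u) = 1) (v : V) :
    ∑ u, walkWeight A u v = 1 := by
  unfold walkWeight
  rw [← sum_filter, hstat v]

theorem reflTransGen_swap_of_stationary (hpos : ∀ v : V, 0 < outdeg A v)
    (hstat : ∀ v : V, ∑ u ∈ univ.filter (fun u => A u v), (1 : ℝ) / (outdeg A u) = 1)
    {u v : V} (huv : A u v) : Relation.ReflTransGen A v u := by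
  classical
  let S := univ.filter (Relation.ReflTransGen A v)
  have hout : ∀ a ∈ S, ∀ b ∉ S, walkWeight A a b = 0 := by
    intro a ha b hb
    refine if_neg fun hab => hb ?_
    exact mem_filter.mpr ⟨mem_univ b, (mem_filter.mp ha).2.tail hab⟩
  by_contra hu
  have hzero := flow_in_eq_zero_of_flow_out_eq_zero (walkWeight_nonneg A)
    (fun w => by rw [sum_walkWeight_left_of_stationary A hstat, sum_walkWeight_right A (hpos w)])
    S hout u (by simpa [S] using hu) v (mem_filter.mpr ⟨mem_univ v, .refl⟩)
  exact (walkWeight_pos A (hpos u) huv).ne' hzero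

end RandomWalk

/-- If the uniform distribution is stationary for the random walk on a finite directed
graph, then every weakly connected component is strongly connected: any vertex weakly
reachable from another is also reachable by a directed path. -/
theorem stmt4 {V : Type*} [Fintype V] (A : V → V → Prop) [DecidableRel A]
    (hpos : ∀ v : V, 0 < outdeg A v)
    (hstat : ∀ v : V, ∑ u ∈ univ.filter (fun u => A u v), (1 : ℝ) / (outdeg A u) = 1) :
    ∀ u v : V, Relation.ReflTransGen (fun x y => A x y ∨ A y x) u v →
      Relation.ReflTransGen A u v := by
  intro u v
  refine Relation.ReflTransGen.lift' id (fun x y hxy => ?_) u v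
  rcases hxy with hxy | hyx
  · exact .single hxy
  · exact reflTransGen_swap_of_stationary A hpos hstat hyx
end

section
/- Let G be a degree-Δ directed graph on which the uniform distribution is stationary for the random walk. Suppose v₀, v₁, v₂, ... is a sequence of vertices with (v_{i+1}, v_i) ∈ E for all i, where for all i ≥ 0, d⁺(v_{2i+1}) = min{d⁺(w) : (w, v_{2i}) ∈ E}, and for all i > 0, d⁺(v_{2i}) = max{d⁺(w) : (w, v_{2i-1}) ∈ E}. Define s_{2k} = d⁻(v_{2k}) and s_{2k+1} = d⁺(v_{2k+1}). Then the sequence (s_i) is non-increasing; moreover, if d⁻(v_i) ≠ d⁺(v_{i+1}) for some i, then s_{i+1} < s_i. -/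
open Finset

/-- The associated sequence `s` of a "degree-alternating" sequence of vertices:
`s (2k) = d⁻(v (2k))` and `s (2k+1) = d⁺(v (2k+1))`. -/
def altSeq {V : Type*} [Fintype V] (A : V → V → Prop) [DecidableRel A] (v : ℕ → V)
    (i : ℕ) : ℕ :=
  if Even i then indeg A (v i) else outdeg A (v i)

/-!
Since `∑_{u → x} 1 / d⁺(u) = 1` is an average of `d⁻(x)` terms, `d⁻(x)` lies between the
smallest and the largest out-degree of an in-neighbour of `x`. With the minimality of
`d⁺(v (2k+1))` this gives `s (2k+1) ≤ s (2k)` directly; with the maximality of `d⁺(v (2k+2))`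
it gives `d⁻(v (2k+1)) ≤ d⁺(v (2k+2))`, which `d⁻ + d⁺ = Δ` turns into `s (2k+2) ≤ s (2k+1)`.
-/

namespace Finset

variable {ι : Type*} {s : Finset ι} {f : ι → ℕ}

theorem le_card_of_sum_one_div_eq_one {m : ℕ} (hsum : ∑ i ∈ s, (1 : ℝ) / f i = 1)
    (hm : ∀ i ∈ s, m ≤ f i) : m ≤ #s := by
  rcases Nat.eq_zero_or_pos m with rfl | hm₀
  · exact Nat.zero_le _
  have key : (1 : ℝ) ≤ #s / m :=
    calc (1 : ℝ) = ∑ i ∈ s, (1 : ℝ) / f i := hsum.symm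
      _ ≤ ∑ _i ∈ s, (1 : ℝ) / m := sum_le_sum fun i hi =>
          one_div_le_one_div_of_le (by positivity) (by exact_mod_cast hm i hi)
      _ = #s / m := by rw [sum_const, nsmul_eq_mul, mul_one_div]
  rw [one_le_div (by positivity)] at key
  exact_mod_cast key

theorem card_le_of_sum_one_div_eq_one {M : ℕ} (hsum : ∑ i ∈ s, (1 : ℝ) / f i = 1)
    (hpos : ∀ i ∈ s, 0 < f i) (hM : ∀ i ∈ s, f i ≤ M) : #s ≤ M := by
  rcases s.eq_empty_or_nonempty with rfl | ⟨j, hj⟩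
  · simp
  have hM₀ : (0 : ℝ) < M := by exact_mod_cast (hpos j hj).trans_le (hM j hj)
  have key : (#s : ℝ) / M ≤ 1 :=
    calc (#s : ℝ) / M = ∑ _i ∈ s, (1 : ℝ) / M := by rw [sum_const, nsmul_eq_mul, mul_one_div]
      _ ≤ ∑ i ∈ s, (1 : ℝ) / f i := sum_le_sum fun i hi =>
          one_div_le_one_div_of_le (by exact_mod_cast hpos i hi) (by exact_mod_cast hM i hi)
      _ = 1 := hsum
  rw [div_le_one hM₀] at key
  exact_mod_cast key

end Finset

section Stationary

variable {V : Type*} [Fintype V] (A : V → V → Prop) [DecidableRel A]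

theorem outdeg_pos_of_adj {u x : V} (h : A u x) : 0 < outdeg A u :=
  card_pos.2 ⟨x, mem_filter.2 ⟨mem_univ x, h⟩⟩

variable {A} {x : V}

theorem le_indeg_of_stationary {m : ℕ}
    (hstat : ∑ u ∈ univ.filter (A · x), (1 : ℝ) / outdeg A u = 1)
    (h : ∀ u, A u x → m ≤ outdeg A u) : m ≤ indeg A x :=
  le_card_of_sum_one_div_eq_one hstat fun u hu => h u (mem_filter.1 hu).2

theorem indeg_le_of_stationary {M : ℕ}
    (hstat : ∑ u ∈ univ.filter (A · x), (1 : ℝ) / outdeg A u = 1)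
    (h : ∀ u, A u x → outdeg A u ≤ M) : indeg A x ≤ M :=
  card_le_of_sum_one_div_eq_one hstat (fun _ hu => outdeg_pos_of_adj A (mem_filter.1 hu).2)
    fun u hu => h u (mem_filter.1 hu).2

end Stationary

section AltSeq

variable {V : Type*} [Fintype V] (A : V → V → Prop) [DecidableRel A] (v : ℕ → V)

theorem altSeq_two_mul (k : ℕ) : altSeq A v (2 * k) = indeg A (v (2 * k)) := by
  simp [altSeq]

theorem altSeq_two_mul_add_one (k : ℕ) : altSeq A v (2 * k + 1) = outdeg A (v (2 * k + 1)) := by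
  simp [altSeq]

end AltSeq

theorem stmt5_general {V : Type*} [Fintype V] (A : V → V → Prop) [DecidableRel A] (Δ : ℕ)
    (hreg : ∀ x : V, indeg A x + outdeg A x = Δ)
    (hstat : ∀ x : V, ∑ u ∈ univ.filter (fun u => A u x), (1 : ℝ) / (outdeg A u) = 1)
    (v : ℕ → V)
    (hmin : ∀ i : ℕ, ∀ w : V, A w (v (2 * i)) → outdeg A (v (2 * i + 1)) ≤ outdeg A w)
    (hmax : ∀ i : ℕ, 0 < i → ∀ w : V, A w (v (2 * i - 1)) →
      outdeg A w ≤ outdeg A (v (2 * i))) :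
    (∀ i : ℕ, altSeq A v (i + 1) ≤ altSeq A v i) ∧
      (∀ i : ℕ, indeg A (v i) ≠ outdeg A (v (i + 1)) →
        altSeq A v (i + 1) < altSeq A v i) := by
  have step : ∀ i, altSeq A v (i + 1) ≤ altSeq A v i ∧
      (indeg A (v i) ≠ outdeg A (v (i + 1)) → altSeq A v (i + 1) ≠ altSeq A v i) := by
    intro i
    obtain ⟨k, rfl | rfl⟩ := Nat.even_or_odd' i
    · have hle := le_indeg_of_stationary (hstat (v (2 * k))) (hmin k)
      rw [altSeq_two_mul_add_one, altSeq_two_mul]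
      omega
    · have hle := indeg_le_of_stationary (hstat (v (2 * k + 1))) (hmax (k + 1) k.succ_pos)
      have hreg₁ := hreg (v (2 * k + 1))
      have hreg₂ := hreg (v (2 * (k + 1)))
      rw [show 2 * k + 1 + 1 = 2 * (k + 1) by ring, altSeq_two_mul, altSeq_two_mul_add_one]
      omega
  exact ⟨fun i => (step i).1, fun i hne => lt_of_le_of_ne (step i).1 ((step i).2 hne)⟩

/-- For a degree-alternating sequence of vertices in a degree-Δ graph with uniform
stationary distribution, the sequence `s` is non-increasing, and it strictly decreases
at any step where `d⁻(v i) ≠ d⁺(v (i+1))`. -/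
theorem stmt5 {V : Type*} [Fintype V] (A : V → V → Prop) [DecidableRel A] (Δ : ℕ)
    (hreg : ∀ x : V, indeg A x + outdeg A x = Δ)
    (hdeg : ∀ x : V, indeg A x ≠ 0 ∧ outdeg A x ≠ 0)
    (hstat : ∀ x : V, ∑ u ∈ univ.filter (fun u => A u x), (1 : ℝ) / (outdeg A u) = 1)
    (v : ℕ → V)
    (hedge : ∀ i : ℕ, A (v (i + 1)) (v i))
    (hmin : ∀ i : ℕ, ∀ w : V, A w (v (2 * i)) → outdeg A (v (2 * i + 1)) ≤ outdeg A w)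
    (hmax : ∀ i : ℕ, 0 < i → ∀ w : V, A w (v (2 * i - 1)) →
      outdeg A w ≤ outdeg A (v (2 * i))) :
    (∀ i : ℕ, altSeq A v (i + 1) ≤ altSeq A v i) ∧
      (∀ i : ℕ, indeg A (v i) ≠ outdeg A (v (i + 1)) →
        altSeq A v (i + 1) < altSeq A v i) :=
  stmt5_general A Δ hreg hstat v hmin hmax
end

section
/- Let G be a degree-Δ directed graph whose uniform distribution is stationary for the random walk. If v is a vertex lying on a directed closed walk of odd length in the underlying undirected graph (i.e., the underlying graph has an odd cycle through v), then d⁻(v) = d⁺(v). -/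
/-!
Along an edge `u → w` stationarity gives `d⁺(u) = d⁻(w) = Δ - d⁺(w)`, so whichever way the edge
is oriented, the out-degrees of its endpoints add up to `Δ`. Out-degrees therefore alternate
between `d⁺(v)` and `Δ - d⁺(v)` along any walk of the underlying graph; returning to `v` after an
odd number of steps forces `2 d⁺(v) = Δ = d⁻(v) + d⁺(v)`.
-/

open Finset

theorem Nat.alternates_of_forall_add_succ_eq {f : ℕ → ℕ} {c n : ℕ}
    (h : ∀ i < n, f i + f (i + 1) = c) :
    (Even n → f n = f 0) ∧ (Odd n → f 0 + f n = c) := by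
  induction n with
  | zero => simp
  | succ n ih =>
    obtain ⟨ih_even, ih_odd⟩ := ih fun i hi => h i (by omega)
    have hstep := h n (by omega)
    refine ⟨fun hn => ?_, fun hn => ?_⟩
    · have := ih_odd (Nat.even_add_one.mp hn |> Nat.not_even_iff_odd.mp)
      omega
    · have := ih_even (Nat.odd_add_one.mp hn |> Nat.not_odd_iff_even.mp)
      omega

theorem outdeg_add_outdeg_of_adj {V : Type*} [Fintype V] {A : V → V → Prop} [DecidableRel A]
    {Δ : ℕ} (hreg : ∀ x : V, indeg A x + outdeg A x = Δ)
    (hP : ∀ u w : V, A u w → outdeg A u = indeg A w) {u w : V} (huw : A u w ∨ A w u) :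
    outdeg A u + outdeg A w = Δ := by
  rcases huw with huw | hwu
  · rw [hP u w huw, hreg]
  · rw [hP w u hwu, add_comm, hreg]

theorem stmt6_general {V : Type*} [Fintype V] (A : V → V → Prop) [DecidableRel A] (Δ : ℕ)
    (hreg : ∀ x : V, indeg A x + outdeg A x = Δ)
    (hP : ∀ u w : V, A u w → outdeg A u = indeg A w)
    (v : V) (L : ℕ) (hL : Odd L) (w : ℕ → V)
    (h0 : w 0 = v) (hend : w L = v)
    (hwalk : ∀ i < L, A (w i) (w (i + 1)) ∨ A (w (i + 1)) (w i)) :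
    indeg A v = outdeg A v := by
  have hsum : outdeg A v + outdeg A v = Δ := by
    have := (Nat.alternates_of_forall_add_succ_eq (f := fun i => outdeg A (w i))
      fun i hi => outdeg_add_outdeg_of_adj hreg hP (hwalk i hi)).2 hL
    rwa [h0, hend] at this
  have := hreg v
  omega

/-- In a degree-Δ graph in which `d⁺(u) = d⁻(v)` holds along every edge (the condition
equivalent to the uniform distribution being stationary), any vertex lying on a closed
walk of odd length in the underlying undirected graph has equal in- and out-degree. -/
theorem stmt6 {V : Type*} [Fintype V] (A : V → V → Prop) [DecidableRel A] (Δ : ℕ)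
    (hreg : ∀ x : V, indeg A x + outdeg A x = Δ)
    (hdeg : ∀ x : V, indeg A x ≠ 0 ∧ outdeg A x ≠ 0)
    (hP : ∀ u w : V, A u w → outdeg A u = indeg A w)
    (v : V) (L : ℕ) (hL : Odd L) (w : ℕ → V)
    (h0 : w 0 = v) (hend : w L = v)
    (hwalk : ∀ i < L, A (w i) (w (i + 1)) ∨ A (w (i + 1)) (w i)) :
    indeg A v = outdeg A v :=
  stmt6_general A Δ hreg hP v L hL w h0 hend hwalk
end

section
/- Let G be a degree-Δ directed graph satisfying: for every edge (u,v), d⁺(u) = d⁻(v), and all in- and out-degrees are nonzero. If d⁻(u) = d⁺(u) for some vertex u, then d⁻(w) = d⁺(w) for every vertex w in the same weakly connected component as u. -/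
open Finset

theorem Relation.ReflTransGen.iff_of_forall_iff {α : Type*} {r : α → α → Prop} {p : α → Prop}
    (h : ∀ a b, r a b → (p a ↔ p b)) {a b : α} (hab : ReflTransGen r a b) : p a ↔ p b := by
  induction hab with
  | refl => rfl
  | tail _ hbc ih => exact ih.trans (h _ _ hbc)

section

variable {V : Type*} [Fintype V] {A : V → V → Prop} [DecidableRel A] {Δ : ℕ}

/-- Along an edge `x → y`, `d⁻(x) - d⁺(x) = Δ - 2 d⁺(x) = Δ - 2 d⁻(y) = d⁺(y) - d⁻(y)`:
the imbalance changes sign, so in particular it vanishes at `x` iff it vanishes at `y`. -/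
theorem indeg_eq_outdeg_iff_of_adj (hreg : ∀ x : V, indeg A x + outdeg A x = Δ)
    (hP : ∀ x y : V, A x y → outdeg A x = indeg A y) {x y : V} (hxy : A x y) :
    indeg A x = outdeg A x ↔ indeg A y = outdeg A y := by
  have := hP x y hxy
  have := hreg x
  have := hreg y
  omega

theorem indeg_eq_outdeg_iff_of_adj_or_adj (hreg : ∀ x : V, indeg A x + outdeg A x = Δ)
    (hP : ∀ x y : V, A x y → outdeg A x = indeg A y) {x y : V} (hxy : A x y ∨ A y x) :
    indeg A x = outdeg A x ↔ indeg A y = outdeg A y :=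
  hxy.elim (indeg_eq_outdeg_iff_of_adj hreg hP) fun hyx =>
    (indeg_eq_outdeg_iff_of_adj hreg hP hyx).symm

end

theorem stmt11_general {V : Type*} [Fintype V] (A : V → V → Prop) [DecidableRel A] (Δ : ℕ)
    (hreg : ∀ x : V, indeg A x + outdeg A x = Δ)
    (hP : ∀ x y : V, A x y → outdeg A x = indeg A y)
    (u : V) (hu : indeg A u = outdeg A u) :
    ∀ w : V, Relation.ReflTransGen (fun a b => A a b ∨ A b a) u w →
      indeg A w = outdeg A w := fun _ huw =>
  (huw.iff_of_forall_iff (p := fun x => indeg A x = outdeg A x) fun _ _ =>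
    indeg_eq_outdeg_iff_of_adj_or_adj hreg hP).1 hu

/-- In a degree-Δ graph with `d⁺(u) = d⁻(v)` along every edge and all degrees nonzero,
if some vertex has equal in- and out-degree, then so does every vertex in its weakly
connected component. -/
theorem stmt11 {V : Type*} [Fintype V] (A : V → V → Prop) [DecidableRel A] (Δ : ℕ)
    (hreg : ∀ x : V, indeg A x + outdeg A x = Δ)
    (hdeg : ∀ x : V, indeg A x ≠ 0 ∧ outdeg A x ≠ 0)
    (hP : ∀ x y : V, A x y → outdeg A x = indeg A y)
    (u : V) (hu : indeg A u = outdeg A u) :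
    ∀ w : V, Relation.ReflTransGen (fun a b => A a b ∨ A b a) u w →
      indeg A w = outdeg A w :=
  stmt11_general A Δ hreg hP u hu
end

section
/- Let G be a connected degree-Δ directed graph whose underlying graph is bipartite with parts V_L, V_R, satisfying d⁺(u) = d⁻(v) for every edge (u,v) and all in/out-degrees nonzero. Then any two vertices of V_L at even distance in the underlying undirected graph have equal out-degree. -/
/-!
By `d⁺(u) = d⁻(v)` and `d⁻(v) + d⁺(v) = Δ`, crossing an edge in either direction replaces the
out-degree `d` by `Δ - d`. This map is an involution on `[0, Δ]`, so two steps of a walk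
preserve the out-degree.
-/

open Finset

theorem Nat.eq_of_even_of_forall_succ_eq_sub {a : ℕ → ℕ} {Δ L : ℕ} (hle : ∀ i, a i ≤ Δ)
    (hstep : ∀ i < L, a (i + 1) = Δ - a i) (hL : Even L) : a L = a 0 := by
  obtain ⟨k, rfl⟩ := hL
  induction k with
  | zero => rfl
  | succ k ih =>
    have h₁ := hstep (k + k) (by omega)
    have h₂ := hstep (k + k + 1) (by omega)
    have h₀ := hle (k + k)
    rw [show k + 1 + (k + 1) = k + k + 1 + 1 by omega]
    have := ih fun i hi => hstep i (by omega)
    omega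

section

variable {V : Type*} [Fintype V] {A : V → V → Prop} [DecidableRel A] {Δ : ℕ}

theorem outdeg_le (hreg : ∀ x, indeg A x + outdeg A x = Δ) (x : V) : outdeg A x ≤ Δ := by
  have := hreg x
  omega

theorem outdeg_eq_sub_of_adj (hreg : ∀ x, indeg A x + outdeg A x = Δ)
    (hP : ∀ x y, A x y → outdeg A x = indeg A y) {u v : V} (h : A u v ∨ A v u) :
    outdeg A v = Δ - outdeg A u := by
  rcases h with h | h
  · have h₁ := hP u v h
    have h₂ := hreg v
    omega
  · have h₁ := hP v u h
    have h₂ := hreg u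
    omega

end

theorem stmt15_general {V : Type*} [Fintype V] (A : V → V → Prop) [DecidableRel A]
    (Δ : ℕ)
    (hreg : ∀ x : V, indeg A x + outdeg A x = Δ)
    (hP : ∀ x y : V, A x y → outdeg A x = indeg A y)
    (VL : Finset V) :
    ∀ x ∈ VL, ∀ y ∈ VL, ∀ L : ℕ, Even L →
      (∃ w : ℕ → V, w 0 = x ∧ w L = y ∧
        ∀ i < L, A (w i) (w (i + 1)) ∨ A (w (i + 1)) (w i)) →
      outdeg A x = outdeg A y := by
  rintro x - y - L hL ⟨w, rfl, rfl, hw⟩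
  exact (Nat.eq_of_even_of_forall_succ_eq_sub (fun i => outdeg_le hreg (w i))
    (fun i hi => outdeg_eq_sub_of_adj hreg hP (hw i hi)) hL).symm

/-- In a connected degree-Δ bipartite graph satisfying `d⁺(u) = d⁻(v)` on every edge
(with nonzero degrees), any two vertices of the left part joined by a walk of even
length in the underlying undirected graph have the same out-degree. -/
theorem stmt15 {V : Type*} [Fintype V] [DecidableEq V] (A : V → V → Prop) [DecidableRel A]
    (Δ : ℕ)
    (hreg : ∀ x : V, indeg A x + outdeg A x = Δ)
    (hdeg : ∀ x : V, indeg A x ≠ 0 ∧ outdeg A x ≠ 0)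
    (hP : ∀ x y : V, A x y → outdeg A x = indeg A y)
    (VL VR : Finset V)
    (hcover : ∀ x : V, (x ∈ VL ∨ x ∈ VR) ∧ ¬(x ∈ VL ∧ x ∈ VR))
    (hbip : ∀ u v : V, A u v → (u ∈ VL ∧ v ∈ VR) ∨ (u ∈ VR ∧ v ∈ VL))
    (hconn : ∀ x y : V, Relation.ReflTransGen (fun a b => A a b ∨ A b a) x y) :
    ∀ x ∈ VL, ∀ y ∈ VL, ∀ L : ℕ, Even L →
      (∃ w : ℕ → V, w 0 = x ∧ w L = y ∧
        ∀ i < L, A (w i) (w (i + 1)) ∨ A (w (i + 1)) (w i)) →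
      outdeg A x = outdeg A y :=
  stmt15_general A Δ hreg hP VL
end
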